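/- The function Z(t,x) is of class C^{1,2} on [0,T) × ((0,L) ∪ (L,∞)) and satisfies the partial differential equation ∂Z/∂t(t,x) + r·x·∂Z/∂x(t,x) + (1/2)·σ²·x²·∂²Z/∂x²(t,x) = 0 for all t ∈ [0,T) and x ∈ (0,L) ∪ (L,∞). -/

import Mathlib

/-!
For `t < T` we have `Z = min F 1` with `F = Φ(d₊) + (L/x)^α Φ(d₋)`. The identity
`(L/x)^α = exp ((d₋² - d₊²) / 2)` and a shift of the Gaussian density (the reflection principle)
give `1 - F = ∫_{v ≤ -d₊} φ(v) (1 - exp (-(d₊ + d₋) (v + d₊))) dv`, and `d₊ + d₋` has the sign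
of `log (x / L)`. Hence `F < 1` for `x < L` and `F > 1` for `x > L`, so near each point of
`[0,T) × ((0,L) ∪ (L,∞))` the function `Z` coincides either with the smooth function `F` or with
the constant `1`. Both are killed by `∂ₜ + r x ∂ₓ + ½ σ² x² ∂ₓ²`; for `F` this is a direct
computation in which `(L/x)^α φ(d₋) = φ(d₊)` cancels the terms coming from the derivatives of `d₊`
and `d₋`.
-/

open Real Set

noncomputable section

/-- The standard normal cumulative distribution function `Φ`. -/
def stdCDF (y : ℝ) : ℝ := ∫ z in Iic y, Real.exp (-z ^ 2 / 2) / Real.sqrt (2 * π)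

/-- The finite-horizon Azéma supermartingale function `Z(t,x)` (with `α = 2r/σ² - 1`):
for `t < T`, `Z(t,x) = min{Φ(d₁) + (L/x)^α Φ(d₂), 1}`, and at `t = T` it is `1` for
`x ≥ L` and `0` for `x < L`. -/
def Zt (r σ L T t x : ℝ) : ℝ :=
  if t < T then
    min (stdCDF ((-Real.log (L / x) + (r - σ ^ 2 / 2) * (T - t)) / (σ * Real.sqrt (T - t))) +
        (L / x) ^ (2 * r / σ ^ 2 - 1) *
          stdCDF ((-Real.log (L / x) - (r - σ ^ 2 / 2) * (T - t)) / (σ * Real.sqrt (T - t)))) 1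
  else if L ≤ x then 1 else 0

open Filter Topology MeasureTheory ProbabilityTheory

lemma setIntegral_Iic_comp_sub (g : ℝ → ℝ) (c k : ℝ) :
    ∫ v in Iic c, g (v - k) = ∫ u in Iic (c - k), g u := by
  simpa using (measurePreserving_sub_right volume k).setIntegral_preimage_emb
    (measurableEmbedding_subRight k) g (Iic (c - k))

lemma setIntegral_Iic_pos {f : ℝ → ℝ} {c : ℝ} (hf : IntegrableOn f (Iic c))
    (hpos : ∀ v < c, 0 < f v) : 0 < ∫ v in Iic c, f v := by
  rw [integral_Iic_eq_integral_Iio, setIntegral_pos_iff_support_of_nonneg_ae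
    (ae_restrict_of_forall_mem measurableSet_Iio fun v hv => (hpos v hv).le)
    (hf.mono_set Iio_subset_Iic_self)]
  have hsupp : Function.support f ∩ Iio c = Iio c :=
    inter_eq_right.2 fun v hv => (hpos v hv).ne'
  simp [hsupp]

lemma exists_pos_sqrt_eq {a : ℝ} (h : 0 < a) : ∃ q, 0 < q ∧ √a = q ∧ a = q ^ 2 :=
  ⟨√a, sqrt_pos.2 h, rfl, (sq_sqrt h.le).symm⟩

def stdPDF (z : ℝ) : ℝ := exp (-z ^ 2 / 2) / √(2 * π)

lemma stdCDF_eq_integral (y : ℝ) : stdCDF y = ∫ z in Iic y, stdPDF z := rfl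

lemma stdPDF_eq_gaussianPDFReal : stdPDF = gaussianPDFReal 0 1 := by
  ext z; simp [stdPDF, gaussianPDFReal_def, div_eq_inv_mul]

lemma stdPDF_pos (z : ℝ) : 0 < stdPDF z := by
  unfold stdPDF; positivity

lemma integrable_stdPDF : Integrable stdPDF := by
  rw [stdPDF_eq_gaussianPDFReal]; exact integrable_gaussianPDFReal 0 1

lemma contDiff_stdPDF {n : WithTop ℕ∞} : ContDiff ℝ n stdPDF := by
  unfold stdPDF; fun_prop

lemma hasDerivAt_stdPDF (z : ℝ) : HasDerivAt stdPDF (-z * stdPDF z) z := by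
  have h : HasDerivAt (fun y : ℝ => -y ^ 2 / 2) (-z) z :=
    ((hasDerivAt_pow 2 z).neg.div_const 2).congr_deriv (by ring)
  exact (h.exp.div_const (√(2 * π))).congr_deriv (by rw [stdPDF]; ring)

lemma hasDerivAt_stdCDF (y : ℝ) : HasDerivAt stdCDF (stdPDF y) y := by
  have hΦ : stdCDF = fun z => stdCDF 0 + ∫ u in (0 : ℝ)..z, stdPDF u := funext fun z => by
    have := intervalIntegral.integral_Iic_sub_Iic (μ := volume) (a := 0) (b := z)
      integrable_stdPDF.integrableOn integrable_stdPDF.integrableOn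
    rw [stdCDF_eq_integral, stdCDF_eq_integral]; linarith
  rw [hΦ]
  exact (intervalIntegral.integral_hasDerivAt_right integrable_stdPDF.intervalIntegrable
    integrable_stdPDF.aestronglyMeasurable.stronglyMeasurableAtFilter
    (contDiff_stdPDF (n := 0)).continuous.continuousAt).const_add _

@[fun_prop]
lemma contDiff_stdCDF {n : ℕ∞} : ContDiff ℝ n stdCDF := by
  refine (contDiff_infty_iff_deriv.2 ⟨fun y => (hasDerivAt_stdCDF y).differentiableAt, ?_⟩).of_le
    (WithTop.coe_le_coe.2 le_top)
  rw [funext fun y => (hasDerivAt_stdCDF y).deriv]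
  exact contDiff_stdPDF

lemma stdCDF_neg (y : ℝ) : stdCDF (-y) = 1 - stdCDF y := by
  have hsplit := integral_add_compl (measurableSet_Iic (a := y)) integrable_stdPDF
  rw [compl_Iic, stdPDF_eq_gaussianPDFReal, integral_gaussianPDFReal_eq_one 0 one_ne_zero,
    ← stdPDF_eq_gaussianPDFReal] at hsplit
  have hneg : stdCDF (-y) = ∫ z in Ioi y, stdPDF z := by
    rw [stdCDF_eq_integral, ← neg_neg y, ← integral_comp_neg_Ioi, neg_neg]
    simp [stdPDF]
  rw [hneg, stdCDF_eq_integral]; linarith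

lemma stdPDF_mul_exp (k v : ℝ) : stdPDF v * exp (k * v) = exp (k ^ 2 / 2) * stdPDF (v - k) := by
  simp only [stdPDF, div_mul_eq_mul_div, mul_div_assoc', ← exp_add]
  ring_nf

lemma integrable_stdPDF_mul_exp (k : ℝ) : Integrable fun v => stdPDF v * exp (k * v) := by
  simp only [stdPDF_mul_exp]
  exact (integrable_stdPDF.comp_sub_right k).const_mul _

lemma integrable_stdPDF_mul_one_sub_exp (k a : ℝ) :
    Integrable fun v => stdPDF v * (1 - exp (k * (v + a))) := by
  refine (integrable_stdPDF.sub ((integrable_stdPDF_mul_exp k).const_mul (exp (k * a)))).congr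
    (ae_of_all _ fun v => ?_)
  simp only [Pi.sub_apply, mul_add, exp_add]; ring

lemma integral_Iic_stdPDF_mul_exp (c k : ℝ) :
    ∫ v in Iic c, stdPDF v * exp (k * v) = exp (k ^ 2 / 2) * stdCDF (c - k) := by
  simp only [stdPDF_mul_exp, integral_const_mul, setIntegral_Iic_comp_sub, stdCDF_eq_integral]

lemma stdCDF_neg_sub_exp_mul_stdCDF (a b : ℝ) :
    stdCDF (-a) - exp ((b ^ 2 - a ^ 2) / 2) * stdCDF b =
      ∫ v in Iic (-a), stdPDF v * (1 - exp (-(a + b) * (v + a))) := by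
  have hexp : ∀ v, stdPDF v * exp (-(a + b) * (v + a)) =
      exp (-(a + b) * a) * (stdPDF v * exp (-(a + b) * v)) := fun v => by
    rw [mul_left_comm, ← exp_add]; ring_nf
  simp only [mul_sub, mul_one, hexp]
  rw [integral_sub integrable_stdPDF.integrableOn
    ((integrable_stdPDF_mul_exp _).const_mul _).integrableOn, integral_const_mul,
    integral_Iic_stdPDF_mul_exp, ← stdCDF_eq_integral, ← mul_assoc, ← exp_add]
  ring_nf

lemma exp_mul_stdCDF_lt_stdCDF_neg {a b : ℝ} (h : a + b < 0) :
    exp ((b ^ 2 - a ^ 2) / 2) * stdCDF b < stdCDF (-a) := by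
  rw [← sub_pos, stdCDF_neg_sub_exp_mul_stdCDF]
  refine setIntegral_Iic_pos (integrable_stdPDF_mul_one_sub_exp _ _).integrableOn
    fun v hv => mul_pos (stdPDF_pos v) ?_
  rw [sub_pos, exp_lt_one_iff]; nlinarith

lemma stdCDF_neg_lt_exp_mul_stdCDF {a b : ℝ} (h : 0 < a + b) :
    stdCDF (-a) < exp ((b ^ 2 - a ^ 2) / 2) * stdCDF b := by
  rw [← sub_neg, stdCDF_neg_sub_exp_mul_stdCDF, ← neg_pos, ← integral_neg]
  refine setIntegral_Iic_pos (integrable_stdPDF_mul_one_sub_exp _ _).neg.integrableOn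
    fun v hv => ?_
  rw [← mul_neg, neg_sub]
  refine mul_pos (stdPDF_pos v) ?_
  rw [sub_pos, one_lt_exp_iff]; nlinarith

section Partial

variable {𝕜 E : Type*} [NontriviallyNormedField 𝕜] [NormedAddCommGroup E] [NormedSpace 𝕜 E]
  {f g : 𝕜 × 𝕜 → E} {p : 𝕜 × 𝕜}

def partialFst (f : 𝕜 × 𝕜 → E) (p : 𝕜 × 𝕜) : E := deriv (fun s => f (s, p.2)) p.1

def partialSnd (f : 𝕜 × 𝕜 → E) (p : 𝕜 × 𝕜) : E := deriv (fun y => f (p.1, y)) p.2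

lemma partialFst_eq_fderiv (hf : DifferentiableAt 𝕜 f p) :
    partialFst f p = fderiv 𝕜 f p (1, 0) :=
  (hf.hasFDerivAt.comp_hasDerivAt p.1
    ((hasDerivAt_id p.1).prodMk (hasDerivAt_const p.1 p.2))).deriv

lemma partialSnd_eq_fderiv (hf : DifferentiableAt 𝕜 f p) :
    partialSnd f p = fderiv 𝕜 f p (0, 1) :=
  (hf.hasFDerivAt.comp_hasDerivAt p.2
    ((hasDerivAt_const p.2 p.1).prodMk (hasDerivAt_id p.2))).deriv

lemma ContDiffAt.eventually_differentiableAt {n : WithTop ℕ∞} (hf : ContDiffAt 𝕜 (n + 1) f p) :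
    ∀ᶠ q in 𝓝 p, DifferentiableAt 𝕜 f q :=
  ((hf.of_le le_add_self).eventually (by simp)).mono fun _ hq => hq.differentiableAt one_ne_zero

lemma ContDiffAt.partialFst {n : WithTop ℕ∞} (hf : ContDiffAt 𝕜 (n + 1) f p) :
    ContDiffAt 𝕜 n (partialFst f) p := by
  refine ((hf.fderiv_right le_rfl).clm_apply (contDiffAt_const (c := ((1, 0) : 𝕜 × 𝕜))))
    |>.congr_of_eventuallyEq ?_
  filter_upwards [hf.eventually_differentiableAt] with q hq using partialFst_eq_fderiv hq

lemma ContDiffAt.partialSnd {n : WithTop ℕ∞} (hf : ContDiffAt 𝕜 (n + 1) f p) :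
    ContDiffAt 𝕜 n (partialSnd f) p := by
  refine ((hf.fderiv_right le_rfl).clm_apply (contDiffAt_const (c := ((0, 1) : 𝕜 × 𝕜))))
    |>.congr_of_eventuallyEq ?_
  filter_upwards [hf.eventually_differentiableAt] with q hq using partialSnd_eq_fderiv hq

lemma Filter.EventuallyEq.partialFst (h : f =ᶠ[𝓝 p] g) : partialFst f =ᶠ[𝓝 p] partialFst g := by
  filter_upwards [eventually_eventually_nhds.2 h] with q hq
  have hline : (fun s => f (s, q.2)) =ᶠ[𝓝 q.1] fun s => g (s, q.2) :=
    ((continuous_id.prodMk continuous_const).tendsto q.1).eventually hq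
  exact hline.deriv_eq

lemma Filter.EventuallyEq.partialSnd (h : f =ᶠ[𝓝 p] g) : partialSnd f =ᶠ[𝓝 p] partialSnd g := by
  filter_upwards [eventually_eventually_nhds.2 h] with q hq
  have hline : (fun y => f (q.1, y)) =ᶠ[𝓝 q.2] fun y => g (q.1, y) :=
    ((continuous_const.prodMk continuous_id).tendsto q.2).eventually hq
  exact hline.deriv_eq

end Partial

def gbmBackwardOp (r σ : ℝ) (f : ℝ × ℝ → ℝ) (p : ℝ × ℝ) : ℝ :=
  partialFst f p + r * p.2 * partialSnd f p + 1 / 2 * σ ^ 2 * p.2 ^ 2 * partialSnd (partialSnd f) p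

lemma Filter.EventuallyEq.gbmBackwardOp_eq {r σ : ℝ} {f g : ℝ × ℝ → ℝ} {p : ℝ × ℝ}
    (h : f =ᶠ[𝓝 p] g) : gbmBackwardOp r σ f p = gbmBackwardOp r σ g p := by
  rw [gbmBackwardOp, gbmBackwardOp, h.partialFst.eq_of_nhds, h.partialSnd.eq_of_nhds,
    h.partialSnd.partialSnd.eq_of_nhds]

namespace Zt

variable {r σ L T t x : ℝ}

def dPlus (r σ L T t x : ℝ) : ℝ := (-log (L / x) + (r - σ ^ 2 / 2) * (T - t)) / (σ * √(T - t))

def dMinus (r σ L T t x : ℝ) : ℝ := (-log (L / x) - (r - σ ^ 2 / 2) * (T - t)) / (σ * √(T - t))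

def uncapped (r σ L T t x : ℝ) : ℝ :=
  stdCDF (dPlus r σ L T t x) + (L / x) ^ (2 * r / σ ^ 2 - 1) * stdCDF (dMinus r σ L T t x)

lemma eq_min_uncapped (h : t < T) : Zt r σ L T t x = min (uncapped r σ L T t x) 1 := by
  simp only [Zt, if_pos h]; rfl

lemma rpow_eq_exp_dMinus_sq_sub_dPlus_sq (hσ : σ ≠ 0) (hL : 0 < L) (hx : 0 < x) (ht : t < T) :
    (L / x) ^ (2 * r / σ ^ 2 - 1) = exp ((dMinus r σ L T t x ^ 2 - dPlus r σ L T t x ^ 2) / 2) := by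
  rw [rpow_def_of_pos (div_pos hL hx), dPlus, dMinus]
  congr 1
  obtain ⟨q, hq, hsq, hTt⟩ := exists_pos_sqrt_eq (sub_pos.2 ht)
  rw [hsq, hTt]
  field_simp
  ring

lemma rpow_mul_stdPDF_dMinus (hσ : σ ≠ 0) (hL : 0 < L) (hx : 0 < x) (ht : t < T) :
    (L / x) ^ (2 * r / σ ^ 2 - 1) * stdPDF (dMinus r σ L T t x) = stdPDF (dPlus r σ L T t x) := by
  rw [rpow_eq_exp_dMinus_sq_sub_dPlus_sq hσ hL hx ht, stdPDF, stdPDF, mul_div_assoc', ← exp_add]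
  ring_nf

lemma dPlus_add_dMinus :
    dPlus r σ L T t x + dMinus r σ L T t x = -2 * log (L / x) / (σ * √(T - t)) := by
  rw [dPlus, dMinus, ← add_div]; ring_nf

lemma uncapped_lt_one (hσ : 0 < σ) (ht : t < T) (hx : 0 < x) (hxL : x < L) :
    uncapped r σ L T t x < 1 := by
  have hsum : dPlus r σ L T t x + dMinus r σ L T t x < 0 := by
    rw [dPlus_add_dMinus]
    exact div_neg_of_neg_of_pos (by nlinarith [log_pos ((one_lt_div hx).2 hxL)])
      (mul_pos hσ (sqrt_pos.2 (sub_pos.2 ht)))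
  have hΦ := exp_mul_stdCDF_lt_stdCDF_neg hsum
  rw [stdCDF_neg] at hΦ
  rw [uncapped, rpow_eq_exp_dMinus_sq_sub_dPlus_sq hσ.ne' (hx.trans hxL) hx ht]
  linarith

lemma one_lt_uncapped (hσ : 0 < σ) (hL : 0 < L) (ht : t < T) (hLx : L < x) :
    1 < uncapped r σ L T t x := by
  have hx := hL.trans hLx
  have hsum : 0 < dPlus r σ L T t x + dMinus r σ L T t x := by
    rw [dPlus_add_dMinus]
    exact div_pos (by nlinarith [log_neg (div_pos hL hx) ((div_lt_one hx).2 hLx)])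
      (mul_pos hσ (sqrt_pos.2 (sub_pos.2 ht)))
  have hΦ := stdCDF_neg_lt_exp_mul_stdCDF hsum
  rw [stdCDF_neg] at hΦ
  rw [uncapped, rpow_eq_exp_dMinus_sq_sub_dPlus_sq hσ.ne' hL hx ht]
  linarith

lemma contDiffAt_uncapped {n : ℕ∞} {p : ℝ × ℝ} (hσ : σ ≠ 0) (hL : L ≠ 0) (ht : p.1 < T)
    (hx : p.2 ≠ 0) : ContDiffAt ℝ n (fun q : ℝ × ℝ => uncapped r σ L T q.1 q.2) p := by
  have hTt : T - p.1 ≠ 0 := (sub_pos.2 ht).ne'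
  simp only [uncapped, dPlus, dMinus]
  fun_prop (disch := first | assumption | positivity | simp [*])

lemma hasDerivAt_div_sigma_sqrt (a ν : ℝ) (hσ : σ ≠ 0) (ht : t < T) :
    HasDerivAt (fun s => (a + ν * (T - s)) / (σ * √(T - s)))
      ((a - ν * (T - t)) / (σ * √(T - t)) / (2 * (T - t))) t := by
  have hTt : 0 < T - t := sub_pos.2 ht
  have hsub : HasDerivAt (fun s : ℝ => T - s) (-1) t := (hasDerivAt_id t).const_sub T
  have hnum := (hsub.const_mul ν).const_add a
  have hden := ((hasDerivAt_sqrt hTt.ne').comp t hsub).const_mul σ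
  refine (hnum.div hden (mul_ne_zero hσ (sqrt_pos.2 hTt).ne')).congr_deriv ?_
  simp only [Function.comp_apply]
  obtain ⟨q, hq, hsq, hTt⟩ := exists_pos_sqrt_eq hTt
  rw [hsq, hTt]
  field_simp
  ring

lemma hasDerivAt_dPlus_t (hσ : σ ≠ 0) (ht : t < T) :
    HasDerivAt (fun s => dPlus r σ L T s x) (dMinus r σ L T t x / (2 * (T - t))) t :=
  hasDerivAt_div_sigma_sqrt _ _ hσ ht

lemma hasDerivAt_dMinus_t (hσ : σ ≠ 0) (ht : t < T) :
    HasDerivAt (fun s => dMinus r σ L T s x) (dPlus r σ L T t x / (2 * (T - t))) t := by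
  have h := hasDerivAt_div_sigma_sqrt (-log (L / x)) (-(r - σ ^ 2 / 2)) hσ ht
  simp only [neg_mul, ← sub_eq_add_neg, sub_neg_eq_add] at h
  exact h

lemma hasDerivAt_neg_log_div (hL : L ≠ 0) (hx : x ≠ 0) :
    HasDerivAt (fun y => -log (L / y)) x⁻¹ x := by
  have h := ((hasDerivAt_inv hx).const_mul L).log (by simp [hL, hx])
  refine h.neg.congr_deriv ?_
  field_simp

lemma hasDerivAt_dPlus_x (hL : L ≠ 0) (hx : x ≠ 0) :
    HasDerivAt (fun y => dPlus r σ L T t y) (x⁻¹ / (σ * √(T - t))) x :=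
  ((hasDerivAt_neg_log_div hL hx).add_const _).div_const _

lemma hasDerivAt_dMinus_x (hL : L ≠ 0) (hx : x ≠ 0) :
    HasDerivAt (fun y => dMinus r σ L T t y) (x⁻¹ / (σ * √(T - t))) x :=
  ((hasDerivAt_neg_log_div hL hx).sub_const _).div_const _

lemma hasDerivAt_rpow_div (a : ℝ) (hL : L ≠ 0) (hx : x ≠ 0) :
    HasDerivAt (fun y => (L / y) ^ a) (-a * (L / x) ^ a / x) x := by
  have h := ((hasDerivAt_inv hx).const_mul L).rpow_const (p := a) (Or.inl (by simp [hL, hx]))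
  refine h.congr_deriv ?_
  rw [← div_eq_mul_inv, rpow_sub_one (div_ne_zero hL hx)]
  field_simp

def uncappedDerivT (r σ L T t x : ℝ) : ℝ :=
  stdPDF (dPlus r σ L T t x) * (dPlus r σ L T t x + dMinus r σ L T t x) / (2 * (T - t))

def uncappedDerivX (r σ L T t x : ℝ) : ℝ :=
  (2 * stdPDF (dPlus r σ L T t x) / (σ * √(T - t)) -
    (2 * r / σ ^ 2 - 1) * (L / x) ^ (2 * r / σ ^ 2 - 1) * stdCDF (dMinus r σ L T t x)) / x

def uncappedDerivXX (r σ L T t x : ℝ) : ℝ :=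
  ((2 * r / σ ^ 2 - 1) * (2 * r / σ ^ 2) * (L / x) ^ (2 * r / σ ^ 2 - 1) *
      stdCDF (dMinus r σ L T t x) -
    stdPDF (dPlus r σ L T t x) *
      (2 * dPlus r σ L T t x / (σ * √(T - t)) ^ 2 + (2 * r / σ ^ 2 + 1) / (σ * √(T - t)))) / x ^ 2

lemma hasDerivAt_uncapped_t (hσ : σ ≠ 0) (hL : 0 < L) (hx : 0 < x) (ht : t < T) :
    HasDerivAt (fun s => uncapped r σ L T s x) (uncappedDerivT r σ L T t x) t := by
  have hΦd₁ := (hasDerivAt_stdCDF _).comp t (hasDerivAt_dPlus_t (r := r) (L := L) (x := x) hσ ht)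
  have hΦd₂ := (hasDerivAt_stdCDF _).comp t (hasDerivAt_dMinus_t (r := r) (L := L) (x := x) hσ ht)
  refine (hΦd₁.add (hΦd₂.const_mul _)).congr_deriv ?_
  rw [uncappedDerivT, ← rpow_mul_stdPDF_dMinus hσ hL hx ht]
  ring

lemma hasDerivAt_uncapped_x (hσ : σ ≠ 0) (hL : 0 < L) (hx : 0 < x) (ht : t < T) :
    HasDerivAt (fun y => uncapped r σ L T t y) (uncappedDerivX r σ L T t x) x := by
  have hΦd₁ := (hasDerivAt_stdCDF _).comp x
    (hasDerivAt_dPlus_x (r := r) (σ := σ) (T := T) (t := t) hL.ne' hx.ne')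
  have hΦd₂ := (hasDerivAt_stdCDF _).comp x
    (hasDerivAt_dMinus_x (r := r) (σ := σ) (T := T) (t := t) hL.ne' hx.ne')
  refine (hΦd₁.add ((hasDerivAt_rpow_div _ hL.ne' hx.ne').mul hΦd₂)).congr_deriv ?_
  simp only [Function.comp_apply]
  rw [uncappedDerivX, ← rpow_mul_stdPDF_dMinus hσ hL hx ht]
  field_simp
  ring

lemma hasDerivAt_uncappedDerivX (hσ : σ ≠ 0) (hL : 0 < L) (hx : 0 < x) (ht : t < T) :
    HasDerivAt (fun y => uncappedDerivX r σ L T t y) (uncappedDerivXX r σ L T t x) x := by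
  have hφd₁ := (hasDerivAt_stdPDF _).comp x
    (hasDerivAt_dPlus_x (r := r) (σ := σ) (T := T) (t := t) hL.ne' hx.ne')
  have hΦd₂ := (hasDerivAt_stdCDF _).comp x
    (hasDerivAt_dMinus_x (r := r) (σ := σ) (T := T) (t := t) hL.ne' hx.ne')
  have hnum := ((hφd₁.const_mul 2).div_const (σ * √(T - t))).sub
    (((hasDerivAt_rpow_div (2 * r / σ ^ 2 - 1) hL.ne' hx.ne').const_mul
      (2 * r / σ ^ 2 - 1)).mul hΦd₂)
  refine (hnum.div (hasDerivAt_id x) hx.ne').congr_deriv ?_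
  have hq : 0 < √(T - t) := sqrt_pos.2 (sub_pos.2 ht)
  simp only [Function.comp_apply, Pi.sub_apply, Pi.mul_apply, id]
  rw [uncappedDerivXX, ← rpow_mul_stdPDF_dMinus hσ hL hx ht]
  field_simp
  ring

lemma uncappedDeriv_pde (hσ : σ ≠ 0) (hx : x ≠ 0) (ht : t < T) :
    uncappedDerivT r σ L T t x + r * x * uncappedDerivX r σ L T t x +
      1 / 2 * σ ^ 2 * x ^ 2 * uncappedDerivXX r σ L T t x = 0 := by
  rw [uncappedDerivT, uncappedDerivX, uncappedDerivXX]
  generalize stdPDF (dPlus r σ L T t x) = A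
  generalize (L / x) ^ (2 * r / σ ^ 2 - 1) * stdCDF (dMinus r σ L T t x) = B
  rw [dPlus, dMinus]
  obtain ⟨q, hq, hsq, hTt⟩ := exists_pos_sqrt_eq (sub_pos.2 ht)
  rw [hsq, hTt]
  field_simp
  ring

lemma gbmBackwardOp_uncapped (hσ : σ ≠ 0) (hL : 0 < L) (hx : 0 < x) (ht : t < T) :
    gbmBackwardOp r σ (fun q : ℝ × ℝ => uncapped r σ L T q.1 q.2) (t, x) = 0 := by
  have hX : ∀ᶠ y in 𝓝 x,
      partialSnd (fun q : ℝ × ℝ => uncapped r σ L T q.1 q.2) (t, y) = uncappedDerivX r σ L T t y :=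
    (eventually_gt_nhds hx).mono fun y hy => (hasDerivAt_uncapped_x hσ hL hy ht).deriv
  have hXX : partialSnd (partialSnd fun q : ℝ × ℝ => uncapped r σ L T q.1 q.2) (t, x) =
      uncappedDerivXX r σ L T t x := by
    rw [partialSnd, EventuallyEq.deriv_eq hX]
    exact (hasDerivAt_uncappedDerivX hσ hL hx ht).deriv
  rw [gbmBackwardOp, hXX, partialFst, partialSnd, (hasDerivAt_uncapped_t hσ hL hx ht).deriv,
    (hasDerivAt_uncapped_x hσ hL hx ht).deriv]
  exact uncappedDeriv_pde hσ hx.ne' ht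

lemma eventuallyEq_uncapped (hσ : 0 < σ) (ht : t < T) (hx : 0 < x) (hxL : x < L) :
    (fun q : ℝ × ℝ => Zt r σ L T q.1 q.2) =ᶠ[𝓝 (t, x)]
      fun q => uncapped r σ L T q.1 q.2 := by
  filter_upwards [continuousAt_fst.eventually (eventually_lt_nhds ht),
    continuousAt_snd.eventually (eventually_gt_nhds hx),
    continuousAt_snd.eventually (eventually_lt_nhds hxL)] with q hqt hqx hqL
  rw [eq_min_uncapped hqt, min_eq_left (uncapped_lt_one hσ hqt hqx hqL).le]

lemma eventuallyEq_one (hσ : 0 < σ) (hL : 0 < L) (ht : t < T) (hLx : L < x) :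
    (fun q : ℝ × ℝ => Zt r σ L T q.1 q.2) =ᶠ[𝓝 (t, x)] fun _ => 1 := by
  filter_upwards [continuousAt_fst.eventually (eventually_lt_nhds ht),
    continuousAt_snd.eventually (eventually_gt_nhds hLx)] with q hqt hqL
  rw [eq_min_uncapped hqt, min_eq_right (one_lt_uncapped hσ hL hqt hqL).le]

lemma contDiffAt {n : ℕ∞} (hσ : 0 < σ) (hL : 0 < L) (ht : t < T) (hx : x ∈ Ioo 0 L ∪ Ioi L) :
    ContDiffAt ℝ n (fun q : ℝ × ℝ => Zt r σ L T q.1 q.2) (t, x) := by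
  rcases hx with ⟨hx, hxL⟩ | hLx
  · exact (contDiffAt_uncapped hσ.ne' hL.ne' ht hx.ne').congr_of_eventuallyEq
      (eventuallyEq_uncapped hσ ht hx hxL)
  · exact contDiffAt_const.congr_of_eventuallyEq (eventuallyEq_one hσ hL ht hLx)

lemma gbmBackwardOp_eq_zero (hσ : 0 < σ) (hL : 0 < L) (ht : t < T)
    (hx : x ∈ Ioo 0 L ∪ Ioi L) :
    gbmBackwardOp r σ (fun q : ℝ × ℝ => Zt r σ L T q.1 q.2) (t, x) = 0 := by
  rcases hx with ⟨hx, hxL⟩ | hLx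
  · rw [(eventuallyEq_uncapped hσ ht hx hxL).gbmBackwardOp_eq]
    exact gbmBackwardOp_uncapped hσ.ne' hL hx ht
  · rw [(eventuallyEq_one hσ hL ht hLx).gbmBackwardOp_eq]
    simp [gbmBackwardOp, partialFst, partialSnd]

end Zt

theorem stmt_7_general (r σ L T : ℝ) (hσ : 0 < σ) (hL : 0 < L) :
    (∀ t ∈ Ico (0 : ℝ) T, ∀ x ∈ Ioo (0 : ℝ) L ∪ Ioi L,
      DifferentiableAt ℝ (fun s => Zt r σ L T s x) t ∧
      ContDiffAt ℝ 2 (fun y => Zt r σ L T t y) x) ∧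
    ContinuousOn (fun p : ℝ × ℝ => deriv (fun s => Zt r σ L T s p.2) p.1)
      (Ico (0 : ℝ) T ×ˢ (Ioo (0 : ℝ) L ∪ Ioi L)) ∧
    ContinuousOn (fun p : ℝ × ℝ => deriv (fun y => Zt r σ L T p.1 y) p.2)
      (Ico (0 : ℝ) T ×ˢ (Ioo (0 : ℝ) L ∪ Ioi L)) ∧
    ContinuousOn (fun p : ℝ × ℝ => deriv (deriv (fun y => Zt r σ L T p.1 y)) p.2)
      (Ico (0 : ℝ) T ×ˢ (Ioo (0 : ℝ) L ∪ Ioi L)) ∧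
    ∀ t ∈ Ico (0 : ℝ) T, ∀ x ∈ Ioo (0 : ℝ) L ∪ Ioi L,
      deriv (fun s => Zt r σ L T s x) t + r * x * deriv (fun y => Zt r σ L T t y) x +
          1 / 2 * σ ^ 2 * x ^ 2 * deriv (deriv (fun y => Zt r σ L T t y)) x = 0 := by
  have hZ : ∀ p ∈ Ico (0 : ℝ) T ×ˢ (Ioo (0 : ℝ) L ∪ Ioi L),
      ContDiffAt ℝ 2 (fun q : ℝ × ℝ => Zt r σ L T q.1 q.2) p :=
    fun p hp => Zt.contDiffAt (n := 2) hσ hL hp.1.2 hp.2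
  refine ⟨fun t ht x hx => ⟨?_, ?_⟩, fun p hp => ?_, fun p hp => ?_, fun p hp => ?_,
    fun t ht x hx => Zt.gbmBackwardOp_eq_zero hσ hL ht.2 hx⟩
  · exact ((hZ (t, x) ⟨ht, hx⟩).differentiableAt two_ne_zero).comp (𝕜 := ℝ) t
      (differentiableAt_id.prodMk (differentiableAt_const x))
  · exact (hZ (t, x) ⟨ht, hx⟩).comp x (contDiffAt_const.prodMk contDiffAt_id)
  · exact ((hZ p hp).partialFst (n := 1)).continuousAt.continuousWithinAt
  · exact ((hZ p hp).partialSnd (n := 1)).continuousAt.continuousWithinAt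
  · exact ((hZ p hp).partialSnd (n := 1)).partialSnd (n := 0) |>.continuousAt.continuousWithinAt

/-- The function `Z(t,x)` is of class `C^{1,2}` on
`[0,T) × ((0,L) ∪ (L,∞))`: it is once differentiable in `t` and twice differentiable
in `x`, with these partial derivatives continuous on the domain; and it satisfies the
PDE `∂Z/∂t + r·x·∂Z/∂x + (1/2)·σ²·x²·∂²Z/∂x² = 0` for all `t ∈ [0,T)` and
`x ∈ (0,L) ∪ (L,∞)`. -/
theorem stmt_7 (r σ L K T : ℝ) (hr : 0 < r) (hσ : 0 < σ) (hL : 0 < L) (hLK : L < K)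
    (hT : 0 < T) :
    (∀ t ∈ Ico (0 : ℝ) T, ∀ x ∈ Ioo (0 : ℝ) L ∪ Ioi L,
      DifferentiableAt ℝ (fun s => Zt r σ L T s x) t ∧
      ContDiffAt ℝ 2 (fun y => Zt r σ L T t y) x) ∧
    ContinuousOn (fun p : ℝ × ℝ => deriv (fun s => Zt r σ L T s p.2) p.1)
      (Ico (0 : ℝ) T ×ˢ (Ioo (0 : ℝ) L ∪ Ioi L)) ∧
    ContinuousOn (fun p : ℝ × ℝ => deriv (fun y => Zt r σ L T p.1 y) p.2)
      (Ico (0 : ℝ) T ×ˢ (Ioo (0 : ℝ) L ∪ Ioi L)) ∧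
    ContinuousOn (fun p : ℝ × ℝ => deriv (deriv (fun y => Zt r σ L T p.1 y)) p.2)
      (Ico (0 : ℝ) T ×ˢ (Ioo (0 : ℝ) L ∪ Ioi L)) ∧
    ∀ t ∈ Ico (0 : ℝ) T, ∀ x ∈ Ioo (0 : ℝ) L ∪ Ioi L,
      deriv (fun s => Zt r σ L T s x) t + r * x * deriv (fun y => Zt r σ L T t y) x +
          1 / 2 * σ ^ 2 * x ^ 2 * deriv (deriv (fun y => Zt r σ L T t y)) x = 0 :=
  stmt_7_general r σ L T hσ hL

end
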